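/- Let (V, Q) be an FBAS. Then (V, Q) enjoys quorum intersection if and only if for every minimal quorum Û of (V, Q), the complement V ∖ Û contains no quorum of (V, Q). -/

import Mathlib

open Finset

variable {α : Type*} [DecidableEq α]

/-- `U` is a quorum of the FBAS `(V, Q)`: a nonempty subset of `V` containing,
for every member `v`, some slice `q ∈ Q v` with `q ⊆ U`. -/
def IsQuorum (V : Finset α) (Q : α → Finset (Finset α)) (U : Finset α) : Prop :=
  U ⊆ V ∧ U.Nonempty ∧ ∀ v ∈ U, ∃ q ∈ Q v, q ⊆ U

/-- A minimal quorum: a quorum none of whose proper subsets is a quorum. -/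
def IsMinimalQuorum (V : Finset α) (Q : α → Finset (Finset α)) (U : Finset α) : Prop :=
  IsQuorum V Q U ∧ ∀ U' ⊂ U, ¬IsQuorum V Q U'

/-- A blocking set: a subset of `V` intersecting every quorum of `(V, Q)`. -/
def IsBlocking (V : Finset α) (Q : α → Finset (Finset α)) (B : Finset α) : Prop :=
  B ⊆ V ∧ ∀ U, IsQuorum V Q U → (B ∩ U).Nonempty

/-- A minimal blocking set: a blocking set none of whose proper subsets is blocking. -/
def IsMinimalBlocking (V : Finset α) (Q : α → Finset (Finset α)) (B : Finset α) : Prop :=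
  IsBlocking V Q B ∧ ∀ B' ⊂ B, ¬IsBlocking V Q B'

/-- A splitting set: a subset of `V` containing the intersection of two distinct quorums. -/
def IsSplitting (V : Finset α) (Q : α → Finset (Finset α)) (S : Finset α) : Prop :=
  S ⊆ V ∧ ∃ U₁ U₂, IsQuorum V Q U₁ ∧ IsQuorum V Q U₂ ∧ U₁ ≠ U₂ ∧ U₁ ∩ U₂ ⊆ S

/-- A minimal splitting set: a splitting set none of whose proper subsets is splitting. -/
def IsMinimalSplitting (V : Finset α) (Q : α → Finset (Finset α)) (S : Finset α) : Prop :=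
  IsSplitting V Q S ∧ ∀ S' ⊂ S, ¬IsSplitting V Q S'

/-- Well-formedness of an FBAS `(V, Q)`: every slice of every node `v ∈ V`
contains `v` and is a subset of `V`. -/
def WellFormed (V : Finset α) (Q : α → Finset (Finset α)) : Prop :=
  ∀ v ∈ V, ∀ q ∈ Q v, v ∈ q ∧ q ⊆ V

/-- `T` is the top tier of `(V, Q)`: the union of all minimal quorums. -/
def IsTopTier (V : Finset α) (Q : α → Finset (Finset α)) (T : Finset α) : Prop :=
  ∀ v, v ∈ T ↔ ∃ U, IsMinimalQuorum V Q U ∧ v ∈ U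

/-- `(V, Q)` enjoys quorum intersection: any two quorums share a node. -/
def QuorumIntersection (V : Finset α) (Q : α → Finset (Finset α)) : Prop :=
  ∀ U₁ U₂, IsQuorum V Q U₁ → IsQuorum V Q U₂ → (U₁ ∩ U₂).Nonempty

lemma isMinimalQuorum_iff_minimal {β : Type*} {V : Finset β} {Q : β → Finset (Finset β)}
    {U : Finset β} : IsMinimalQuorum V Q U ↔ Minimal (IsQuorum V Q) U :=
  minimal_iff_forall_lt.symm

lemma IsQuorum.exists_isMinimalQuorum_subset {β : Type*} {V : Finset β}
    {Q : β → Finset (Finset β)} {U : Finset β} (hU : IsQuorum V Q U) :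
    ∃ Um ⊆ U, IsMinimalQuorum V Q Um := by
  obtain ⟨Um, hUmU, hUm⟩ := exists_minimal_le_of_wellFoundedLT _ U hU
  exact ⟨Um, hUmU, isMinimalQuorum_iff_minimal.2 hUm⟩

lemma exists_quorum_subset_sdiff_iff {V : Finset α} {Q : α → Finset (Finset α)}
    {W : Finset α} :
    (∃ U, IsQuorum V Q U ∧ U ⊆ V \ W) ↔ ∃ U, IsQuorum V Q U ∧ Disjoint U W := by
  simp only [subset_sdiff]
  exact exists_congr fun U => ⟨fun h => ⟨h.1, h.2.2⟩, fun h => ⟨h.1, h.1.1, h.2⟩⟩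

theorem quorum_intersection_iff_no_quorum_in_complement_general
    (V : Finset α) (Q : α → Finset (Finset α)) :
    QuorumIntersection V Q ↔
      ∀ Um, IsMinimalQuorum V Q Um → ¬∃ U, IsQuorum V Q U ∧ U ⊆ V \ Um := by
  simp only [exists_quorum_subset_sdiff_iff]
  constructor
  · rintro hqi Um hUm ⟨U, hU, hdisj⟩
    exact not_disjoint_iff_nonempty_inter.2 (hqi U Um hU hUm.1) hdisj
  · intro h U₁ U₂ hU₁ hU₂
    obtain ⟨Um, hUmU₁, hUm⟩ := hU₁.exists_isMinimalQuorum_subset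
    by_contra hdisj
    rw [← not_disjoint_iff_nonempty_inter, not_not] at hdisj
    exact h Um hUm ⟨U₂, hU₂, (hdisj.mono_left hUmU₁).symm⟩

/-- quorum intersection holds iff for every minimal quorum `Um`,
the complement `V \ Um` contains no quorum. -/
theorem quorum_intersection_iff_no_quorum_in_complement
    (V : Finset α) (Q : α → Finset (Finset α)) (hwf : WellFormed V Q) :
    QuorumIntersection V Q ↔
      ∀ Um, IsMinimalQuorum V Q Um → ¬∃ U, IsQuorum V Q U ∧ U ⊆ V \ Um :=
  quorum_intersection_iff_no_quorum_in_complement_general V Q
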